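/- Let K be a compact metric space and F ∈ B_{1/4}(K), i.e. F is a uniform limit of functions Gₙ with sup_n |Gₙ|_D < ∞. Then there exists M < ∞ such that for every finite sequence of positive reals (δᵢ)ᵢ₌₁ⁿ with K_n(F,(δᵢ)) ≠ ∅ one has Σᵢ₌₁ⁿ δᵢ ≤ M. -/

import Mathlib

/-!
Write `G` as the pointwise limit of continuous `fₙ` with total variation `s ≤ C`.
Partial variations plus or minus `fₙ` increase with `n`, so `s + G` and `s - G` are lower
semicontinuous. If `F` oscillates by `δ` at `x` on `L` and `|F - G| ≤ ε`, then near `x` one finds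
`y, z ∈ L` with `(s - G) y + (s + G) z ≳ 2 s x` and `G y - G z ≳ δ - 2ε`, so `s y + s z ≳ 2 s x + δ - 2ε`
and `s` grows by about `δ/2 - ε` at one of them. Climbing the derived sets, `s` grows by
`Σ δᵢ / 2 - O(nε)` while staying in `[0, C]`; letting `ε → 0` gives `Σ δᵢ ≤ 2C`.
-/

open Filter

/-- The oscillation of `F` restricted to `L` at `x` is at least `δ`. -/
def oscGE {K : Type*} [TopologicalSpace K] (F : K → ℝ) (L : Set K) (x : K) (δ : ℝ) : Prop :=
  ∀ U ∈ nhds x, ∀ η < δ, ∃ y ∈ L ∩ U, ∃ z ∈ L ∩ U, η < F y - F z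

/-- Derived sets with varying thresholds. -/
def oscDerivedSetSeq {K : Type*} [TopologicalSpace K] (F : K → ℝ) (δ : ℕ → ℝ) : ℕ → Set K
  | 0 => Set.univ
  | n + 1 => {x ∈ oscDerivedSetSeq F δ n | oscGE F (oscDerivedSetSeq F δ n) x (δ (n + 1))}

/-- `G` has DBSC norm at most `C`: some sequence of continuous functions starting at `0`
converges pointwise to `G` with variation sums uniformly bounded by `C`. -/
def DBSCNormLE {K : Type*} [TopologicalSpace K] (G : K → ℝ) (C : ℝ) : Prop :=
  ∃ f : ℕ → K → ℝ, (∀ n, Continuous (f n)) ∧ f 0 = 0 ∧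
    (∀ k, Tendsto (fun n => f n k) atTop (nhds (G k))) ∧
    ∀ (k : K) (N : ℕ), ∑ n ∈ Finset.range N, |f (n+1) k - f n k| ≤ C

open Topology Finset

theorem lowerSemicontinuous_of_monotone_of_tendsto {X ι α : Type*} [TopologicalSpace X]
    [Preorder ι] [IsDirectedOrder ι] [Nonempty ι] [LinearOrder α] [TopologicalSpace α]
    [OrderTopology α] {u : ι → X → α} {g : X → α} (hu : ∀ i, Continuous (u i))
    (hmono : ∀ x, Monotone fun i => u i x) (hlim : ∀ x, Tendsto (fun i => u i x) atTop (𝓝 (g x))) :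
    LowerSemicontinuous g := by
  intro x y hy
  obtain ⟨i, hi⟩ := ((hlim x).eventually (lt_mem_nhds hy)).exists
  filter_upwards [(hu i).continuousAt.eventually (lt_mem_nhds hi)] with x' hx'
  exact hx'.trans_le ((hmono x').ge_of_tendsto (hlim x') i)

theorem monotone_sum_range_abs_sub (f : ℕ → ℝ) :
    Monotone fun N => ∑ m ∈ range N, |f (m + 1) - f m| :=
  monotone_nat_of_le_succ fun N => by
    simp only [sum_range_succ, le_add_iff_nonneg_right, abs_nonneg]

theorem monotone_sum_range_abs_sub_add (f : ℕ → ℝ) :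
    Monotone fun N => ∑ m ∈ range N, |f (m + 1) - f m| + f N :=
  monotone_nat_of_le_succ fun N => by
    simp only [sum_range_succ]
    linarith [neg_abs_le (f (N + 1) - f N)]

theorem monotone_sum_range_abs_sub_sub (f : ℕ → ℝ) :
    Monotone fun N => ∑ m ∈ range N, |f (m + 1) - f m| - f N :=
  monotone_nat_of_le_succ fun N => by
    simp only [sum_range_succ]
    linarith [le_abs_self (f (N + 1) - f N)]

theorem DBSCNormLE.exists_lowerSemicontinuous {K : Type*} [TopologicalSpace K] {G : K → ℝ}
    {C : ℝ} (hG : DBSCNormLE G C) :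
    ∃ s : K → ℝ, (∀ k, 0 ≤ s k ∧ s k ≤ C) ∧ LowerSemicontinuous (fun k => s k + G k) ∧
      LowerSemicontinuous (fun k => s k - G k) := by
  obtain ⟨f, hcont, -, hlim, hbd⟩ := hG
  set p : ℕ → K → ℝ := fun N k => ∑ m ∈ range N, |f (m + 1) k - f m k| with hp
  have hpcont (N : ℕ) : Continuous (p N) :=
    continuous_finsetSum _ fun m _ => ((hcont (m + 1)).sub (hcont m)).abs
  have hpbdd (k : K) : BddAbove (Set.range fun N => p N k) :=
    ⟨C, by rintro _ ⟨N, rfl⟩; exact hbd k N⟩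
  have hps (k : K) : Tendsto (fun N => p N k) atTop (𝓝 (⨆ N, p N k)) :=
    tendsto_atTop_ciSup (monotone_sum_range_abs_sub (f · k)) (hpbdd k)
  refine ⟨fun k => ⨆ N, p N k, fun k => ⟨?_, ciSup_le (hbd k)⟩, ?_, ?_⟩
  · simpa [hp] using le_ciSup (hpbdd k) 0
  · exact lowerSemicontinuous_of_monotone_of_tendsto (fun N => (hpcont N).add (hcont N))
      (fun k => monotone_sum_range_abs_sub_add (f · k)) fun k => (hps k).add (hlim k)
  · exact lowerSemicontinuous_of_monotone_of_tendsto (fun N => (hpcont N).sub (hcont N))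
      (fun k => monotone_sum_range_abs_sub_sub (f · k)) fun k => (hps k).sub (hlim k)

section Oscillation

variable {K : Type*} [TopologicalSpace K] {F G s : K → ℝ} {ε : ℝ}

theorem exists_mem_lt_of_oscGE (hplus : LowerSemicontinuous fun k => s k + G k)
    (hminus : LowerSemicontinuous fun k => s k - G k) (hFG : ∀ k, |F k - G k| ≤ ε)
    {L : Set K} {x : K} {d η : ℝ} (hη : 0 < η) (hosc : oscGE F L x d) :
    ∃ w ∈ L, s x + d / 2 - ε - η < s w := by
  have hU := (hplus x (s x + G x - η / 2) (by linarith)).and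
    (hminus x (s x - G x - η / 2) (by linarith))
  obtain ⟨y, ⟨hyL, hy⟩, z, ⟨hzL, hz⟩, hyz⟩ := hosc _ hU (d - η) (by linarith)
  have hGy := abs_le.1 (hFG y)
  have hGz := abs_le.1 (hFG z)
  have hsum : 2 * s x + d - 2 * ε - 2 * η < s y + s z := by linarith [hy.2, hz.1]
  rcases le_total (s z) (s y) with h | h
  · exact ⟨y, hyL, by linarith⟩
  · exact ⟨z, hzL, by linarith⟩

theorem exists_le_of_mem_oscDerivedSetSeq (hplus : LowerSemicontinuous fun k => s k + G k)
    (hminus : LowerSemicontinuous fun k => s k - G k) (hFG : ∀ k, |F k - G k| ≤ ε) (hε : 0 < ε)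
    (δ : ℕ → ℝ) (n : ℕ) {x : K} (hx : x ∈ oscDerivedSetSeq F δ n) :
    ∃ w, s x + (∑ i ∈ range n, δ (i + 1)) / 2 - 2 * n * ε ≤ s w := by
  induction n generalizing x with
  | zero => exact ⟨x, by simp⟩
  | succ n ih =>
    obtain ⟨-, hosc⟩ := hx
    obtain ⟨y, hyn, hy⟩ := exists_mem_lt_of_oscGE hplus hminus hFG hε hosc
    obtain ⟨w, hw⟩ := ih hyn
    refine ⟨w, ?_⟩
    rw [sum_range_succ]
    push_cast
    linarith

theorem DBSCNormLE.sum_le_of_nonempty_oscDerivedSetSeq {C : ℝ} (hG : DBSCNormLE G C)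
    (hFG : ∀ k, |F k - G k| ≤ ε) (hε : 0 < ε) {δ : ℕ → ℝ} {n : ℕ}
    (hne : (oscDerivedSetSeq F δ n).Nonempty) :
    ∑ i ∈ range n, δ (i + 1) ≤ 2 * C + 4 * n * ε := by
  obtain ⟨s, hsC, hplus, hminus⟩ := hG.exists_lowerSemicontinuous
  obtain ⟨x, hx⟩ := hne
  obtain ⟨w, hw⟩ := exists_le_of_mem_oscDerivedSetSeq hplus hminus hFG hε δ n hx
  linarith [(hsC x).1, (hsC w).2]

end Oscillation

theorem stmt8_general {K : Type*} [MetricSpace K] (F : K → ℝ)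
    (hF : ∃ (C : ℝ) (G : ℕ → K → ℝ), (∀ m, DBSCNormLE (G m) C) ∧
      TendstoUniformly G F atTop) :
    ∃ M : ℝ, ∀ (n : ℕ) (δ : ℕ → ℝ), (∀ i, 0 < δ i) →
      (oscDerivedSetSeq F δ n).Nonempty → ∑ i ∈ Finset.range n, δ (i + 1) ≤ M := by
  obtain ⟨C, G, hGC, hunif⟩ := hF
  refine ⟨2 * C, fun n δ _ hne => ?_⟩
  have hlim : Tendsto (fun ε : ℝ => 2 * C + 4 * n * ε) (𝓝[>] 0) (𝓝 (2 * C)) :=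
    tendsto_nhdsWithin_of_tendsto_nhds <| by
      simpa using ((continuous_const_mul (4 * n : ℝ)).const_add (2 * C)).tendsto 0
  refine ge_of_tendsto hlim ?_
  filter_upwards [self_mem_nhdsWithin] with ε (hε : 0 < ε)
  obtain ⟨m, hm⟩ := (Metric.tendstoUniformly_iff.1 hunif ε hε).exists
  exact (hGC m).sum_le_of_nonempty_oscDerivedSetSeq
    (fun k => by simpa [Real.dist_eq] using (hm k).le) hε hne

/-- If `F` is a uniform limit of functions `Gₘ` with `sup_m |Gₘ|_D < ∞`
(i.e. `F ∈ B_{1/4}(K)`), then there exists `M < ∞` such that whenever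
`K_n(F,(δᵢ)) ≠ ∅` for positive reals `δ₁,…,δₙ`, one has `Σᵢ₌₁ⁿ δᵢ ≤ M`. -/
theorem stmt8 {K : Type*} [MetricSpace K] [CompactSpace K] (F : K → ℝ)
    (hF : ∃ (C : ℝ) (G : ℕ → K → ℝ), (∀ m, DBSCNormLE (G m) C) ∧
      TendstoUniformly G F atTop) :
    ∃ M : ℝ, ∀ (n : ℕ) (δ : ℕ → ℝ), (∀ i, 0 < δ i) →
      (oscDerivedSetSeq F δ n).Nonempty → ∑ i ∈ Finset.range n, δ (i + 1) ≤ M :=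
  stmt8_general F hF
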